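/- For every a > 0 there is a constant C > 0 such that for every ε ∈ (0,1]: ε^{−1} ∫_{ℝ³} Σ_{i,j} σ_{ij}(ξ/ε) ξ_i ξ_j e^{−a|ξ|²} dξ ≤ C ε². (This quantifies the vanishing, as ε → 0, of the rescaled ion–electron Landau collision dissipation evaluated on Maxwellians, since ∇_ξ of a Gaussian is proportional to ξ times the Gaussian.) -/

import Mathlib

open MeasureTheory Real

noncomputable section

abbrev E3 := EuclideanSpace ℝ (Fin 3)

/-- Landau collision kernel entries. -/
def Phi (z : E3) (i j : Fin 3) : ℝ :=
  (if i = j then (1 : ℝ) else 0) / ‖z‖ - z i * z j / ‖z‖ ^ 3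

/-- Japanese bracket of a vector. -/
def jap (v : E3) : ℝ := Real.sqrt (1 + ‖v‖ ^ 2)

/-- Japanese bracket of a real number. -/
def japR (r : ℝ) : ℝ := Real.sqrt (1 + r ^ 2)

/-- Maxwellian with inverse temperature `q`. -/
def maxw (q : ℝ) (ξ : E3) : ℝ :=
  (q / (2 * π)) ^ ((3 : ℝ) / 2) * Real.exp (-q * ‖ξ‖ ^ 2 / 2)

def sqMaxw (q : ℝ) (ξ : E3) : ℝ := Real.sqrt (maxw q ξ)

/-- Entrywise convolution `(Φ_{ij} ∗ G)(v)`. -/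
def convPhi (G : E3 → ℝ) (i j : Fin 3) (v : E3) : ℝ := ∫ w : E3, Phi (v - w) i j * G w

/-- `σ_{ij} = Φ_{ij} ∗ μ` with `μ = μ₁` the standard Maxwellian. -/
def sigmaM (i j : Fin 3) (v : E3) : ℝ := convPhi (maxw 1) i j v

/-- Orthogonal projection onto `span {v}`. -/
def projPar (v u : E3) : E3 := ((inner ℝ u v : ℝ) / ‖v‖ ^ 2) • v

/-- Orthogonal projection onto `{v}ᗮ`. -/
def projPerp (v u : E3) : E3 := u - projPar v u

/-- Cone of points making angle less than `θ` with the line spanned by `ν`. -/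
def Acone (ν : E3) (θ : ℝ) : Set E3 := {w : E3 | ‖projPerp ν w‖ < Real.sin θ * ‖w‖}

def e3 (i : Fin 3) : E3 := EuclideanSpace.single i 1

/-- Partial derivative in direction `i`. -/
def pd (i : Fin 3) (f : E3 → ℝ) (v : E3) : ℝ := fderiv ℝ f v (e3 i)

/-- The Landau collision operator in divergence form. -/
def Qop (G₁ G₂ : E3 → ℝ) (v : E3) : ℝ :=
  ∑ i, pd i (fun w => ∑ j, ∫ w' : E3,
    Phi (w - w') i j * (G₁ w' * pd j G₂ w - G₂ w * pd j G₁ w')) v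

/-- Rescaled electron–ion collision operator `Q^ε_{−+}`. -/
def Qmp (ε : ℝ) (G₁ G₂ : E3 → ℝ) (v : E3) : ℝ :=
  ∑ i, pd i (fun w => ∑ j, ∫ ξ' : E3,
    Phi (ε • w - ξ') i j * (ε * G₁ ξ' * pd j G₂ w - G₂ w * pd j G₁ ξ')) v

/-- Rescaled ion–electron collision operator `Q^ε_{+−}`. -/
def Qpm (ε : ℝ) (G₁ G₂ : E3 → ℝ) (ξ : E3) : ℝ :=
  ∑ i, pd i (fun w => ∑ j, ∫ v' : E3,
    Phi (w - ε • v') i j * (G₁ v' * pd j G₂ w - ε * G₂ w * pd j G₁ v')) ξ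

def lap (f : E3 → ℝ) (x : E3) : ℝ := ∑ i, pd i (pd i f) x

/-- Fundamental domain for the torus `𝕋³ = (ℝ/ℤ)³`. -/
def cube : Set E3 := {x : E3 | ∀ i, x i ∈ Set.Ico (0 : ℝ) 1}

def L2norm (ψ : E3 → ℝ) : ℝ := Real.sqrt (∫ v : E3, ψ v ^ 2)

def L2ip (f g : E3 → ℝ) : ℝ := ∫ v : E3, f v * g v

/-- Square of the `H_σ` norm. -/
def HsigSq (ψ : E3 → ℝ) : ℝ :=
  (∫ v : E3, ∑ i, ∑ j, sigmaM i j v * pd i ψ v * pd j ψ v) +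
    ∫ v : E3, (∑ i, sigmaM i i v) * ψ v ^ 2

def HsigNorm (ψ : E3 → ℝ) : ℝ := Real.sqrt (HsigSq ψ)

/-- Square of the `H⁻_{σ;ε}` seminorm. -/
def HminSq (ε : ℝ) (ψ : E3 → ℝ) : ℝ :=
  ε⁻¹ * ∫ ξ : E3, ∑ i, ∑ j, sigmaM i j (ε⁻¹ • ξ) * pd i ψ ξ * pd j ψ ξ

def HminNorm (ε : ℝ) (ψ : E3 → ℝ) : ℝ := Real.sqrt (HminSq ε ψ)

/-- Orthogonal `L²` projection onto
`span {μ_γ^{1/2}, ξ₁μ_γ^{1/2}, ξ₂μ_γ^{1/2}, ξ₃μ_γ^{1/2}, |ξ|²μ_γ^{1/2}}`, computed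
via the orthonormal basis `μ_γ^{1/2}, √γ ξ_i μ_γ^{1/2}, (γ|ξ|²−3)/√6 μ_γ^{1/2}`. -/
def Pgam (γ : ℝ) (h : E3 → ℝ) (ξ : E3) : ℝ :=
  (∫ ζ : E3, h ζ * sqMaxw γ ζ) * sqMaxw γ ξ +
  (∑ i, (∫ ζ : E3, h ζ * (Real.sqrt γ * ζ i * sqMaxw γ ζ)) * (Real.sqrt γ * ξ i * sqMaxw γ ξ)) +
  (∫ ζ : E3, h ζ * ((γ * ‖ζ‖ ^ 2 - 3) / Real.sqrt 6 * sqMaxw γ ζ)) *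
    ((γ * ‖ξ‖ ^ 2 - 3) / Real.sqrt 6 * sqMaxw γ ξ)

def PgamPerp (γ : ℝ) (h : E3 → ℝ) (ξ : E3) : ℝ := h ξ - Pgam γ h ξ

/-- Linearized Landau operator `ℒ_γ` (nonnegative sign convention). -/
def Lgam (γ : ℝ) (h : E3 → ℝ) (ξ : E3) : ℝ :=
  -(sqMaxw γ ξ)⁻¹ *
    (Qop (fun w => sqMaxw γ w * h w) (maxw γ) ξ + Qop (maxw γ) (fun w => sqMaxw γ w * h w) ξ)

/-- Two-temperature linearized operator `ℒ̃_{γ,q}`. -/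
def Ltil (γ q : ℝ) (h : E3 → ℝ) (ξ : E3) : ℝ :=
  -(sqMaxw q ξ)⁻¹ *
    (Qop (fun w => sqMaxw q w * h w) (maxw γ) ξ + Qop (maxw γ) (fun w => sqMaxw q w * h w) ξ)

/-- Nonlinear collision form `Γ_q`. -/
def Gamq (q : ℝ) (h₁ h₂ : E3 → ℝ) (ξ : E3) : ℝ :=
  -(sqMaxw q ξ)⁻¹ * Qop (fun w => sqMaxw q w * h₁ w) (fun w => sqMaxw q w * h₂ w) ξ

/-- Linearized ion–electron operator `ℳ_{q,G}` (nonnegative sign convention). -/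
def Mqg (ε q : ℝ) (G h : E3 → ℝ) (ξ : E3) : ℝ :=
  -(sqMaxw q ξ)⁻¹ * Qpm ε G (fun w => sqMaxw q w * h w) ξ

/-! Since `Φ(z) z = 0`, the form `ξ · Φ(v - w) ξ` only sees `ξ` modulo `v - w`. At `v = ξ / ε`
this gives `ξ · Φ(ξ/ε - w) ξ = ε² (ξ/ε) · Φ(ξ/ε - w) (ξ/ε) ≤ ε² |w|² / |ξ/ε - w|
= ε³ |w|² / |ξ - ε w|`, so the integrand is at most `ε³ ∫ |w|² μ(w) e^{-a|ξ|²} / |ξ - ε w| dw`.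
After exchanging the integrals, `∫ e^{-a|ξ|²} / |ξ - c| dξ` is bounded uniformly in `c`, because
`|x|⁻¹` is locally integrable in dimension three; hence the integral is `O(ε³)`. -/

open scoped RealInnerProductSpace

section LandauForm

variable {V : Type*} [NormedAddCommGroup V] [InnerProductSpace ℝ V]

/-- `landauForm z u = |u - (u·ẑ)ẑ|² / |z|` is the quadratic form of the Landau kernel `Φ(z)`. -/
def landauForm (z u : V) : ℝ := ‖u‖ ^ 2 / ‖z‖ - ⟪z, u⟫ ^ 2 / ‖z‖ ^ 3

lemma landauForm_nonneg (z u : V) : 0 ≤ landauForm z u := by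
  rcases (norm_nonneg z).eq_or_lt with hz | hz
  · simp [landauForm, ← hz]
  have hcs : ⟪z, u⟫ ^ 2 ≤ ‖z‖ ^ 2 * ‖u‖ ^ 2 := by
    simpa [mul_pow, sq_abs] using pow_le_pow_left₀ (abs_nonneg _) (abs_real_inner_le_norm z u) 2
  rw [landauForm, sub_nonneg, div_le_div_iff₀ (by positivity) hz]
  nlinarith

lemma landauForm_le (z u : V) : landauForm z u ≤ ‖u - z‖ ^ 2 / ‖z‖ := by
  rcases (norm_nonneg z).eq_or_lt with hz | hz
  · simp [landauForm, ← hz]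
  have hgap : ‖u - z‖ ^ 2 / ‖z‖ - landauForm z u = (‖z‖ ^ 2 - ⟪z, u⟫) ^ 2 / ‖z‖ ^ 3 := by
    rw [landauForm, norm_sub_sq_real, real_inner_comm]
    field_simp
    ring
  have : 0 ≤ (‖z‖ ^ 2 - ⟪z, u⟫) ^ 2 / ‖z‖ ^ 3 := by positivity
  linarith

lemma landauForm_smul_right (z u : V) (c : ℝ) :
    landauForm z (c • u) = c ^ 2 * landauForm z u := by
  simp only [landauForm, norm_smul, inner_smul_right, Real.norm_eq_abs, mul_pow, sq_abs]
  ring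

lemma landauForm_inv_smul_sub_le {ε : ℝ} (hε : 0 < ε) (ξ w : V) :
    landauForm (ε⁻¹ • ξ - w) ξ ≤ ε ^ 3 * (‖w‖ ^ 2 * ‖ξ - ε • w‖⁻¹) := by
  set v := ε⁻¹ • ξ
  have hξ : ξ = ε • v := by simp [v, smul_smul, hε.ne']
  have hvw : ‖v - w‖ = ε⁻¹ * ‖ξ - ε • w‖ := by
    rw [hξ, ← norm_smul_of_nonneg (inv_nonneg.2 hε.le), smul_sub]
    simp [smul_smul, hε.ne']
  calc landauForm (v - w) ξ = ε ^ 2 * landauForm (v - w) v := by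
        rw [hξ, landauForm_smul_right]
    _ ≤ ε ^ 2 * (‖v - (v - w)‖ ^ 2 / ‖v - w‖) := by gcongr; exact landauForm_le _ _
    _ = ε ^ 3 * (‖w‖ ^ 2 * ‖ξ - ε • w‖⁻¹) := by
        rw [sub_sub_cancel, hvw, div_eq_mul_inv, mul_inv, inv_inv]
        ring

end LandauForm

section InversePotential

open Metric

variable {E : Type*} [NormedAddCommGroup E] [MeasurableSpace E] [BorelSpace E] {μ : Measure E}

/-- Near `c` the singularity is controlled by `|g| ≤ 1`, away from `c` by `‖x - c‖⁻¹ ≤ 1`. -/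
lemma lintegral_enorm_mul_inv_norm_sub_le [μ.IsAddRightInvariant] {g : E → ℝ}
    (hg : ∀ x, |g x| ≤ 1) (c : E) :
    ∫⁻ x, ‖g x * ‖x - c‖⁻¹‖ₑ ∂μ ≤ (∫⁻ y in ball 0 1, ‖‖y‖⁻¹‖ₑ ∂μ) + ∫⁻ x, ‖g x‖ₑ ∂μ := by
  have hpt : ∀ x, ‖g x * ‖x - c‖⁻¹‖ₑ
      ≤ (ball (0 : E) 1).indicator (fun y => ‖‖y‖⁻¹‖ₑ) (x - c) + ‖g x‖ₑ := by
    intro x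
    rw [enorm_mul]
    by_cases hx : ‖x - c‖ < 1
    · rw [Set.indicator_of_mem (by simpa using hx)]
      refine le_add_right (mul_le_of_le_one_left zero_le ?_)
      simpa using enorm_le_iff_norm_le.2 (show ‖g x‖ ≤ ‖(1 : ℝ)‖ by simpa using hg x)
    · rw [Set.indicator_of_notMem (by simpa using hx), zero_add]
      refine mul_le_of_le_one_right zero_le ?_
      have : ‖(‖x - c‖⁻¹)‖ ≤ ‖(1 : ℝ)‖ := by
        rw [norm_inv, norm_norm, norm_one]
        exact inv_le_one_of_one_le₀ (not_lt.1 hx)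
      simpa using enorm_le_iff_norm_le.2 this
  calc ∫⁻ x, ‖g x * ‖x - c‖⁻¹‖ₑ ∂μ
      ≤ ∫⁻ x, (ball (0 : E) 1).indicator (fun y => ‖‖y‖⁻¹‖ₑ) (x - c) + ‖g x‖ₑ ∂μ :=
        lintegral_mono hpt
    _ = (∫⁻ y in ball 0 1, ‖‖y‖⁻¹‖ₑ ∂μ) + ∫⁻ x, ‖g x‖ₑ ∂μ := by
        have hmeas : Measurable fun x => (ball (0 : E) 1).indicator (fun y => ‖‖y‖⁻¹‖ₑ) (x - c) :=
          (measurable_norm.inv.enorm.indicator measurableSet_ball).comp (measurable_sub_const c)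
        rw [lintegral_add_left hmeas, lintegral_sub_right_eq_self
          ((ball (0 : E) 1).indicator fun y => ‖‖y‖⁻¹‖ₑ), lintegral_indicator measurableSet_ball]

variable [NormedSpace ℝ E] [FiniteDimensional ℝ E] [μ.IsAddHaarMeasure]

lemma lintegral_inv_norm_ball_lt_top (hE : 1 < Module.finrank ℝ E) :
    ∫⁻ y in ball 0 1, ‖‖y‖⁻¹‖ₑ ∂μ < ⊤ := by
  refine (integrableOn_ball_of_norm_le_rpow (C := 1) (α := 1) hE.le (by exact_mod_cast hE)
    (.of_forall fun y => ?_) (by fun_prop)).hasFiniteIntegral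
  simp [Real.rpow_neg_one]

lemma integrable_mul_inv_norm_sub (hE : 1 < Module.finrank ℝ E) {g : E → ℝ}
    (hgi : Integrable g μ) (hg : ∀ x, |g x| ≤ 1) (c : E) :
    Integrable (fun x => g x * ‖x - c‖⁻¹) μ :=
  ⟨hgi.aestronglyMeasurable.mul (by fun_prop),
    (lintegral_enorm_mul_inv_norm_sub_le hg c).trans_lt
      (ENNReal.add_lt_top.2 ⟨lintegral_inv_norm_ball_lt_top hE, hgi.hasFiniteIntegral⟩)⟩

lemma integrable_norm_pow_mul_exp_neg_mul_norm_sq [Nontrivial E] (k : ℕ) {b : ℝ} (hb : 0 < b) :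
    Integrable (fun x => ‖x‖ ^ k * Real.exp (-b * ‖x‖ ^ 2)) μ := by
  refine (integrable_fun_norm_addHaar μ (f := fun y => y ^ k * Real.exp (-b * y ^ 2))).2 ?_
  have h := (integrable_rpow_mul_exp_neg_mul_sq hb (s := (Module.finrank ℝ E - 1 + k : ℕ))
    (neg_one_lt_zero.trans_le (Nat.cast_nonneg _))).integrableOn (s := Set.Ioi 0)
  refine h.congr_fun (fun y _ => ?_) measurableSet_Ioi
  simp only [Real.rpow_natCast, smul_eq_mul, pow_add]
  ring

lemma integrable_exp_neg_mul_norm_sq [Nontrivial E] {b : ℝ} (hb : 0 < b) :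
    Integrable (fun x => Real.exp (-b * ‖x‖ ^ 2)) μ := by
  simpa using integrable_norm_pow_mul_exp_neg_mul_norm_sq (μ := μ) 0 hb

end InversePotential

section Maxwellian

variable {q : ℝ}

lemma maxw_eq (ξ : E3) :
    maxw q ξ = (q / (2 * π)) ^ ((3 : ℝ) / 2) * exp (-(q / 2) * ‖ξ‖ ^ 2) := by
  rw [maxw, neg_mul, neg_mul, neg_div, mul_div_right_comm]

lemma maxw_nonneg (hq : 0 ≤ q) (ξ : E3) : 0 ≤ maxw q ξ := by
  unfold maxw
  positivity

lemma integrable_norm_sq_mul_maxw (hq : 0 < q) :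
    Integrable (fun w : E3 => ‖w‖ ^ 2 * maxw q w) := by
  simpa only [maxw_eq, mul_left_comm] using
    (integrable_norm_pow_mul_exp_neg_mul_norm_sq (E := E3) (μ := volume) 2 (half_pos hq)).const_mul
      ((q / (2 * π)) ^ ((3 : ℝ) / 2))

lemma sum_Phi_mul_mul (z u : E3) : ∑ i, ∑ j, Phi z i j * u i * u j = landauForm z u := by
  simp only [landauForm, Phi, EuclideanSpace.real_norm_sq_eq, PiLp.inner_apply, Fin.sum_univ_three]
  simp
  ring

lemma abs_Phi_le (z : E3) (i j : Fin 3) : |Phi z i j| ≤ 2 * ‖z‖⁻¹ := by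
  have hzi : |z i| ≤ ‖z‖ := PiLp.norm_apply_le z i
  have hzj : |z j| ≤ ‖z‖ := PiLp.norm_apply_le z j
  have hδ : |(if i = j then (1 : ℝ) else 0)| ≤ 1 := by split_ifs <;> simp
  rcases (norm_nonneg z).eq_or_lt with hz | hz
  · simp [Phi, ← hz]
  calc |Phi z i j| ≤ |(if i = j then (1 : ℝ) else 0) / ‖z‖| + |z i * z j / ‖z‖ ^ 3| :=
        abs_sub _ _
    _ ≤ 1 / ‖z‖ + ‖z‖ * ‖z‖ / ‖z‖ ^ 3 := by
        rw [abs_div, abs_div, abs_mul, abs_of_pos hz, abs_of_pos (pow_pos hz 3)]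
        gcongr
    _ = 2 * ‖z‖⁻¹ := by field_simp; ring

lemma integrable_Phi_sub_mul_maxw (hq : 0 < q) (v : E3) (i j : Fin 3) :
    Integrable (fun w => Phi (v - w) i j * maxw q w) := by
  have hgauss : Integrable (fun w : E3 => exp (-(q / 2) * ‖w‖ ^ 2) * ‖w - v‖⁻¹) :=
    integrable_mul_inv_norm_sub (by simp) (integrable_exp_neg_mul_norm_sq (half_pos hq))
      (fun w => by rw [abs_of_pos (exp_pos _), exp_le_one_iff]; nlinarith [sq_nonneg ‖w‖]) v
  refine (hgauss.const_mul (2 * (q / (2 * π)) ^ ((3 : ℝ) / 2))).mono' (by unfold Phi maxw; fun_prop)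
    (.of_forall fun w => ?_)
  rw [norm_mul, Real.norm_eq_abs, Real.norm_of_nonneg (maxw_nonneg hq.le w), maxw_eq,
    norm_sub_rev]
  calc |Phi (v - w) i j| * ((q / (2 * π)) ^ ((3 : ℝ) / 2) * exp (-(q / 2) * ‖w‖ ^ 2))
      ≤ 2 * ‖v - w‖⁻¹ * ((q / (2 * π)) ^ ((3 : ℝ) / 2) * exp (-(q / 2) * ‖w‖ ^ 2)) := by
        gcongr; exact abs_Phi_le _ i j
    _ = _ := by ring

lemma sum_convPhi_maxw_mul_mul (hq : 0 < q) (v ξ : E3) :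
    ∑ i, ∑ j, convPhi (maxw q) i j v * ξ i * ξ j = ∫ w, landauForm (v - w) ξ * maxw q w := by
  have hint (i j : Fin 3) : Integrable (fun w => Phi (v - w) i j * ξ i * ξ j * maxw q w) := by
    simpa only [mul_right_comm _ (maxw q _), mul_assoc] using
      (integrable_Phi_sub_mul_maxw hq v i j).mul_const (ξ i * ξ j)
  simp_rw [← sum_Phi_mul_mul, Finset.sum_mul]
  rw [integral_finsetSum _ fun i _ => integrable_finsetSum _ fun j _ => hint i j]
  refine Finset.sum_congr rfl fun i _ => ?_
  rw [integral_finsetSum _ fun j _ => hint i j]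
  refine Finset.sum_congr rfl fun j _ => ?_
  rw [convPhi, mul_assoc, ← integral_mul_const]
  congr 1 with w
  ring

end Maxwellian

section Dissipation

lemma enorm_sum_sigmaM_inv_smul_le {ε : ℝ} (hε : 0 < ε) (ξ : E3) :
    ‖∑ i, ∑ j, sigmaM i j (ε⁻¹ • ξ) * ξ i * ξ j‖ₑ
      ≤ ‖ε ^ 3‖ₑ * ∫⁻ w, ‖‖w‖ ^ 2 * maxw 1 w‖ₑ * ‖‖ξ - ε • w‖⁻¹‖ₑ := by
  simp only [sigmaM]
  rw [sum_convPhi_maxw_mul_mul one_pos, ← lintegral_const_mul' _ _ enorm_ne_top]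
  refine (enorm_integral_le_lintegral_enorm _).trans (lintegral_mono fun w => ?_)
  simp only [← enorm_mul]
  refine enorm_le_iff_norm_le.2 ?_
  have hform := landauForm_nonneg (ε⁻¹ • ξ - w) ξ
  have hmaxw := maxw_nonneg zero_le_one w
  rw [Real.norm_of_nonneg (by positivity), Real.norm_of_nonneg (by positivity)]
  calc landauForm (ε⁻¹ • ξ - w) ξ * maxw 1 w
      ≤ ε ^ 3 * (‖w‖ ^ 2 * ‖ξ - ε • w‖⁻¹) * maxw 1 w := by
        gcongr
        exact landauForm_inv_smul_sub_le hε ξ w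
    _ = ε ^ 3 * (‖w‖ ^ 2 * maxw 1 w * ‖ξ - ε • w‖⁻¹) := by ring

lemma enorm_integral_sigmaM_mul_gauss_le {a ε : ℝ} (ha : 0 ≤ a) (hε : 0 < ε) :
    ‖∫ ξ : E3, (∑ i, ∑ j, sigmaM i j (ε⁻¹ • ξ) * ξ i * ξ j) * exp (-a * ‖ξ‖ ^ 2)‖ₑ
      ≤ ‖ε ^ 3‖ₑ * ((∫⁻ w : E3, ‖‖w‖ ^ 2 * maxw 1 w‖ₑ) *
        ((∫⁻ y in Metric.ball (0 : E3) 1, ‖‖y‖⁻¹‖ₑ) + ∫⁻ ξ : E3, ‖exp (-a * ‖ξ‖ ^ 2)‖ₑ)) := by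
  set G := fun ξ : E3 => exp (-a * ‖ξ‖ ^ 2)
  set m := fun w : E3 => ‖w‖ ^ 2 * maxw 1 w
  have hG (ξ : E3) : |G ξ| ≤ 1 := by
    rw [abs_of_pos (exp_pos _), exp_le_one_iff]
    nlinarith [sq_nonneg ‖ξ‖]
  calc _ ≤ ∫⁻ ξ, ‖∑ i, ∑ j, sigmaM i j (ε⁻¹ • ξ) * ξ i * ξ j‖ₑ * ‖G ξ‖ₑ := by
        simpa only [enorm_mul] using enorm_integral_le_lintegral_enorm
          (fun ξ : E3 => (∑ i, ∑ j, sigmaM i j (ε⁻¹ • ξ) * ξ i * ξ j) * G ξ)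
    _ ≤ ∫⁻ ξ, ‖ε ^ 3‖ₑ * ∫⁻ w, ‖m w‖ₑ * ‖G ξ * ‖ξ - ε • w‖⁻¹‖ₑ := by
        refine lintegral_mono fun ξ => ?_
        grw [enorm_sum_sigmaM_inv_smul_le hε ξ, mul_assoc, ← lintegral_mul_const' _ _ enorm_ne_top]
        simp only [enorm_mul, mul_assoc, mul_comm ‖G ξ‖ₑ, m]
        rfl
    _ = ‖ε ^ 3‖ₑ * ∫⁻ w, ‖m w‖ₑ * ∫⁻ ξ, ‖G ξ * ‖ξ - ε • w‖⁻¹‖ₑ := by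
        rw [lintegral_const_mul' _ _ enorm_ne_top, lintegral_lintegral_swap]
        · simp only [lintegral_const_mul' _ _ enorm_ne_top]
        · unfold m G maxw
          fun_prop
    _ ≤ ‖ε ^ 3‖ₑ * ∫⁻ w, ‖m w‖ₑ * ((∫⁻ y in Metric.ball (0 : E3) 1, ‖‖y‖⁻¹‖ₑ) + ∫⁻ ξ, ‖G ξ‖ₑ) := by
        gcongr with w
        exact lintegral_enorm_mul_inv_norm_sub_le hG _
    _ = _ := by
        rw [lintegral_mul_const]
        unfold m maxw
        fun_prop

end Dissipation

/-- Vanishing of the rescaled ion–electron dissipation on Gaussians: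
`ε⁻¹ ∫ ξ·σ(ξ/ε)ξ e^{−a|ξ|²} dξ ≤ C ε²`. -/
theorem stmt_19 (a : ℝ) (ha : 0 < a) :
    ∃ C > (0:ℝ), ∀ ε ∈ Set.Ioc (0:ℝ) 1,
      ε⁻¹ * (∫ ξ : E3, (∑ i, ∑ j, sigmaM i j (ε⁻¹ • ξ) * ξ i * ξ j)
          * Real.exp (-a * ‖ξ‖ ^ 2))
        ≤ C * ε ^ 2 := by
  set A := (∫⁻ w : E3, ‖‖w‖ ^ 2 * maxw 1 w‖ₑ) *
    ((∫⁻ y in Metric.ball (0 : E3) 1, ‖‖y‖⁻¹‖ₑ) + ∫⁻ ξ : E3, ‖exp (-a * ‖ξ‖ ^ 2)‖ₑ)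
  have hA : A ≠ ⊤ := ENNReal.mul_ne_top (integrable_norm_sq_mul_maxw one_pos).2.ne <|
    ENNReal.add_ne_top.2 ⟨(lintegral_inv_norm_ball_lt_top (by simp)).ne,
      (integrable_exp_neg_mul_norm_sq ha).2.ne⟩
  refine ⟨A.toReal + 1, by positivity, fun ε ⟨hε, _⟩ => ?_⟩
  have hbound : ∫ ξ : E3, (∑ i, ∑ j, sigmaM i j (ε⁻¹ • ξ) * ξ i * ξ j) * exp (-a * ‖ξ‖ ^ 2)
      ≤ ε ^ 3 * A.toReal := by
    have := ENNReal.toReal_mono (ENNReal.mul_ne_top enorm_ne_top hA)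
      (enorm_integral_sigmaM_mul_gauss_le ha.le hε)
    rw [ENNReal.toReal_mul, toReal_enorm, toReal_enorm, Real.norm_eq_abs, Real.norm_eq_abs,
      abs_of_pos (pow_pos hε 3)] at this
    exact (le_abs_self _).trans this
  calc ε⁻¹ * ∫ ξ : E3, (∑ i, ∑ j, sigmaM i j (ε⁻¹ • ξ) * ξ i * ξ j) * exp (-a * ‖ξ‖ ^ 2)
      ≤ ε⁻¹ * (ε ^ 3 * A.toReal) := by gcongr
    _ = A.toReal * ε ^ 2 := by field_simp
    _ ≤ (A.toReal + 1) * ε ^ 2 := by gcongr; linarith
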